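/- Let d > m ≥ 1 be integers with d and m both even, t, c ∈ ℂ \ {0}, and Q(z) = t·z^d + c·z^m. Then both the positive real direction θ = 0 and the negative real direction θ = π are good rays for Q if and only if (Arg t, Arg c) ∈ H, where Arg is the principal argument with values in (−π, π] and H = {(x,y) ∈ ℝ² : |x| < π, |y| < π, |y − x| < π}. -/

import Mathlib

/-!
For even `d` and `m` the substitution `z ↦ -z` fixes `Q` and every condition of a good ray, so
the ray `θ = π` is good exactly when `θ = 0` is. On the positive axis the conditions say that `t`
and `c` avoid the negative axis and that `t r^d + c r^m = r^m (r^(d-m) t + c)` avoids `(-∞, 0]`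
for all `r > 0`, i.e. that every `s t + c` with `s > 0` does. The half-line `{s t + c : s > 0}`
meets `(-∞, 0]` exactly when `t` and `c` lie in opposite open half-planes and `Im (conj t * c)`
has the sign of `Im t` (or vanishes). As `Im t = |t| sin (Arg t)`, `Im c = |c| sin (Arg c)` and
`Im (conj t * c) = |t| |c| sin (Arg c - Arg t)`, these sign conditions say `|Arg c - Arg t| ≥ π`.
-/

open Complex

/-- The direction `θ` (i.e. the ray `L(θ) = {r e^{iθ} : r > 0}`) is a *good ray* for the
binomial `Q(z) = t z^d + c z^m`:
(i) `L(θ)` is not a Stokes line of `t z^d dz²`;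
(ii) `L(θ)` is not a Stokes line of `c z^m dz²`;
(iii) `L(θ)` contains no turning point of `Q`;
(iv) `L(θ)` is not tangent to any vertical trajectory of `Q(z)dz²`. -/
def GoodRay (d m : ℕ) (t c : ℂ) (θ : ℝ) : Prop :=
  (¬ ∃ x : ℝ, x < 0 ∧ t * Complex.exp ((((d : ℝ) + 2) * θ : ℂ) * Complex.I) = (x : ℂ)) ∧
  (¬ ∃ x : ℝ, x < 0 ∧ c * Complex.exp ((((m : ℝ) + 2) * θ : ℂ) * Complex.I) = (x : ℂ)) ∧
  (∀ r : ℝ, 0 < r →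
    t * ((r : ℂ) * Complex.exp ((θ : ℂ) * Complex.I)) ^ d +
      c * ((r : ℂ) * Complex.exp ((θ : ℂ) * Complex.I)) ^ m ≠ 0) ∧
  (∀ r : ℝ, 0 < r → ¬ ∃ x : ℝ, x ≤ 0 ∧
    ((r : ℂ) * Complex.exp ((θ : ℂ) * Complex.I)) ^ 2 *
      (t * ((r : ℂ) * Complex.exp ((θ : ℂ) * Complex.I)) ^ d +
       c * ((r : ℂ) * Complex.exp ((θ : ℂ) * Complex.I)) ^ m) = (x : ℂ))

open scoped Real

namespace Real

lemma sin_pos_iff_of_mem_Ioo {x : ℝ} (hx : x ∈ Set.Ioo (-π) π) : 0 < sin x ↔ 0 < x :=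
  ⟨fun hs => not_le.mp fun h => (sin_nonpos_of_nonpos_of_neg_pi_le h hx.1.le).not_gt hs,
    fun h => sin_pos_of_pos_of_lt_pi h hx.2⟩

lemma sin_neg_iff_of_mem_Ioo {x : ℝ} (hx : x ∈ Set.Ioo (-π) π) : sin x < 0 ↔ x < 0 :=
  ⟨fun hs => not_le.mp fun h => (sin_nonneg_of_nonneg_of_le_pi h hx.2.le).not_gt hs,
    fun h => sin_neg_of_neg_of_neg_pi_lt h hx.1⟩

lemma pi_le_abs_sub_iff {α β : ℝ} (hα : α ∈ Set.Ioo (-π) π) (hβ : β ∈ Set.Ioo (-π) π) :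
    π ≤ |β - α| ↔ sin α * sin β < 0 ∧ 0 ≤ sin α * sin (β - α) := by
  obtain ⟨hα₁, hα₂⟩ := hα
  obtain ⟨hβ₁, hβ₂⟩ := hβ
  constructor
  · intro h
    rcases le_abs'.mp h with h | h
    · have hsin : 0 ≤ sin (β - α) := by
        rw [← neg_neg (sin _), ← sin_add_pi, neg_nonneg]
        exact sin_nonpos_of_nonpos_of_neg_pi_le (by linarith) (by linarith)
      have hsα : 0 < sin α := sin_pos_of_pos_of_lt_pi (by linarith) hα₂
      exact ⟨mul_neg_of_pos_of_neg hsα (sin_neg_of_neg_of_neg_pi_lt (by linarith) hβ₁),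
        mul_nonneg hsα.le hsin⟩
    · have hsin : sin (β - α) ≤ 0 := by
        rw [← neg_neg (sin _), ← sin_sub_pi, neg_nonpos]
        exact sin_nonneg_of_nonneg_of_le_pi (by linarith) (by linarith)
      have hsα : sin α < 0 := sin_neg_of_neg_of_neg_pi_lt (by linarith) hα₁
      exact ⟨mul_neg_of_neg_of_pos hsα (sin_pos_of_pos_of_lt_pi (by linarith) hβ₂),
        mul_nonneg_of_nonpos_of_nonpos hsα.le hsin⟩
  · rintro ⟨hsign, hsin⟩
    by_contra! h
    obtain ⟨h₁, h₂⟩ := abs_lt.mp h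
    rcases mul_neg_iff.mp hsign with ⟨hsα, hsβ⟩ | ⟨hsα, hsβ⟩
    · rw [sin_pos_iff_of_mem_Ioo ⟨hα₁, hα₂⟩] at hsα
      rw [sin_neg_iff_of_mem_Ioo ⟨hβ₁, hβ₂⟩] at hsβ
      have : sin α * sin (β - α) < 0 := mul_neg_of_pos_of_neg (sin_pos_of_pos_of_lt_pi hsα hα₂)
        (sin_neg_of_neg_of_neg_pi_lt (by linarith) h₁)
      linarith
    · rw [sin_neg_iff_of_mem_Ioo ⟨hα₁, hα₂⟩] at hsα
      rw [sin_pos_iff_of_mem_Ioo ⟨hβ₁, hβ₂⟩] at hsβ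
      have : sin α * sin (β - α) < 0 := mul_neg_of_neg_of_pos
        (sin_neg_of_neg_of_neg_pi_lt hsα hα₁) (sin_pos_of_pos_of_lt_pi (by linarith) h₂)
      linarith

end Real

namespace Complex

lemma not_exists_neg_ofReal_eq_iff (z : ℂ) : (¬ ∃ x : ℝ, x < 0 ∧ z = x) ↔ |arg z| < π := by
  rw [abs_lt, and_iff_right (neg_pi_lt_arg z), arg_lt_pi_iff]
  constructor
  · intro h
    by_contra! hz
    exact h ⟨z.re, hz.1, ext rfl (by simpa using hz.2)⟩
  · rintro hz ⟨x, hx, rfl⟩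
    simp [hx.not_ge] at hz

lemma not_exists_nonpos_ofReal_eq_iff (z : ℂ) : (¬ ∃ x : ℝ, x ≤ 0 ∧ z = x) ↔ z ∈ slitPlane := by
  rw [mem_slitPlane_iff]
  constructor
  · intro h
    by_contra! hz
    exact h ⟨z.re, hz.1, ext rfl (by simpa using hz.2)⟩
  · rintro hz ⟨x, hx, rfl⟩
    simp [hx.not_gt] at hz

lemma ofReal_mul_mem_slitPlane_iff {r : ℝ} (hr : 0 < r) {z : ℂ} :
    (r : ℂ) * z ∈ slitPlane ↔ z ∈ slitPlane := by
  simp [mem_slitPlane_iff, mul_pos_iff_of_pos_left hr, hr.ne']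

lemma mem_slitPlane_of_abs_arg_lt_pi {z : ℂ} (hz : z ≠ 0) (harg : |arg z| < π) :
    z ∈ slitPlane :=
  mem_slitPlane_iff_arg.mpr ⟨fun h => (abs_of_pos Real.pi_pos ▸ h ▸ harg).false, hz⟩

lemma pi_le_abs_arg_sub_arg_iff {t c : ℂ} (ht : t ∈ slitPlane) (hc : c ∈ slitPlane) :
    π ≤ |arg c - arg t| ↔ t.im * c.im < 0 ∧ 0 ≤ t.im * (t.re * c.im - t.im * c.re) := by
  have arg_mem {z : ℂ} (hz : z ∈ slitPlane) : arg z ∈ Set.Ioo (-π) π :=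
    ⟨neg_pi_lt_arg z, (arg_le_pi z).lt_of_ne (slitPlane_arg_ne_pi hz)⟩
  have hnt : 0 < ‖t‖ := norm_pos_iff.mpr (slitPlane_ne_zero ht)
  have hnc : 0 < ‖c‖ := norm_pos_iff.mpr (slitPlane_ne_zero hc)
  have him : t.im * c.im = (‖t‖ * ‖c‖) * (Real.sin (arg t) * Real.sin (arg c)) := by
    rw [← norm_mul_sin_arg t, ← norm_mul_sin_arg c]; ring
  have hcross : t.im * (t.re * c.im - t.im * c.re) =
      (‖t‖ ^ 2 * ‖c‖) * (Real.sin (arg t) * Real.sin (arg c - arg t)) := by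
    rw [Real.sin_sub, ← norm_mul_sin_arg t, ← norm_mul_sin_arg c, ← norm_mul_cos_arg t,
      ← norm_mul_cos_arg c]
    ring
  rw [Real.pi_le_abs_sub_iff (arg_mem ht) (arg_mem hc), him, hcross,
    mul_nonneg_iff_of_pos_left (mul_pos (pow_pos hnt 2) hnc), ← smul_eq_mul (‖t‖ * ‖c‖),
    smul_neg_iff_of_pos_left (mul_pos hnt hnc)]

lemma exists_pos_mul_add_notMem_slitPlane_iff {t c : ℂ} (ht : t ∈ slitPlane) (hc : c ∈ slitPlane) :
    (∃ s : ℝ, 0 < s ∧ s * t + c ∉ slitPlane) ↔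
      t.im * c.im < 0 ∧ 0 ≤ t.im * (t.re * c.im - t.im * c.re) := by
  rw [mem_slitPlane_iff] at ht hc
  simp only [mem_slitPlane_iff, not_or, not_lt, not_not, add_re, add_im, re_ofReal_mul,
    im_ofReal_mul]
  constructor
  · rintro ⟨s, hs, hre, him⟩
    have hci : c.im = -(s * t.im) := by linarith
    have hti : t.im ≠ 0 := by
      intro h0
      have htr : 0 < t.re := by simpa [h0] using ht
      have hcr : 0 < c.re := by simpa [hci, h0] using hc
      nlinarith
    refine ⟨by rw [hci]; nlinarith [sq_pos_of_ne_zero hti], ?_⟩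
    have : t.im * (t.re * c.im - t.im * c.re) = -t.im ^ 2 * (s * t.re + c.re) := by
      rw [hci]; ring
    rw [this]
    exact mul_nonneg_of_nonpos_of_nonpos (by nlinarith [sq_nonneg t.im]) hre
  · rintro ⟨hsign, hcross⟩
    have hti : t.im ≠ 0 := by rintro h0; simp [h0] at hsign
    -- the `s` for which `(s * t + c).im = 0`
    refine ⟨-(t.im * c.im) / t.im ^ 2, div_pos (neg_pos.mpr hsign) (sq_pos_of_ne_zero hti), ?_, ?_⟩
    · have : -(t.im * c.im) / t.im ^ 2 * t.re + c.re =
          -(t.im * (t.re * c.im - t.im * c.re)) / t.im ^ 2 := by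
        field_simp; ring
      rw [this]
      exact div_nonpos_of_nonpos_of_nonneg (neg_nonpos.mpr hcross) (sq_nonneg _)
    · field_simp; ring

lemma forall_pos_mul_add_mem_slitPlane_iff {t c : ℂ} (ht : t ∈ slitPlane)
    (hc : c ∈ slitPlane) :
    (∀ s : ℝ, 0 < s → s * t + c ∈ slitPlane) ↔ |arg c - arg t| < π := by
  rw [← not_le, pi_le_abs_arg_sub_arg_iff ht hc, ← exists_pos_mul_add_notMem_slitPlane_iff ht hc]
  simp only [not_exists, not_and, not_not]

lemma forall_pos_pow_mem_slitPlane_iff {d m : ℕ} (hmd : m < d) (t c : ℂ) :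
    (∀ r : ℝ, 0 < r → t * (r : ℂ) ^ d + c * (r : ℂ) ^ m ∈ slitPlane) ↔
      ∀ s : ℝ, 0 < s → s * t + c ∈ slitPlane := by
  obtain ⟨k, rfl⟩ := Nat.exists_eq_add_of_lt hmd
  have hQ (r : ℝ) : t * (r : ℂ) ^ (m + k + 1) + c * (r : ℂ) ^ m =
      ((r ^ m : ℝ) : ℂ) * (((r ^ (k + 1) : ℝ) : ℂ) * t + c) := by
    push_cast; ring
  constructor
  · intro h s hs
    have hroot := Real.rpow_inv_natCast_pow hs.le (n := k + 1) (by omega)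
    have := h (s ^ ((k + 1 : ℕ) : ℝ)⁻¹) (by positivity)
    rwa [hQ, ofReal_mul_mem_slitPlane_iff (by positivity), hroot] at this
  · intro h r hr
    rw [hQ, ofReal_mul_mem_slitPlane_iff (pow_pos hr m)]
    exact h _ (pow_pos hr _)

end Complex

lemma goodRay_zero_iff (d m : ℕ) (t c : ℂ) : GoodRay d m t c 0 ↔
    |arg t| < π ∧ |arg c| < π ∧ ∀ r : ℝ, 0 < r → t * (r : ℂ) ^ d + c * (r : ℂ) ^ m ∈ slitPlane := by
  simp only [GoodRay, ofReal_zero, mul_zero, zero_mul, exp_zero, mul_one,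
    not_exists_neg_ofReal_eq_iff, not_exists_nonpos_ofReal_eq_iff]
  have hscale {r : ℝ} (hr : 0 < r) {z : ℂ} : (r : ℂ) ^ 2 * z ∈ slitPlane ↔ z ∈ slitPlane := by
    rw [← ofReal_pow, ofReal_mul_mem_slitPlane_iff (pow_pos hr 2)]
  constructor
  · rintro ⟨ht, hc, -, hQ⟩
    exact ⟨ht, hc, fun r hr => (hscale hr).mp (hQ r hr)⟩
  · rintro ⟨ht, hc, hQ⟩
    exact ⟨ht, hc, fun r hr => slitPlane_ne_zero (hQ r hr), fun r hr => (hscale hr).mpr (hQ r hr)⟩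

lemma goodRay_add_pi_iff {d m : ℕ} (hd : Even d) (hm : Even m) (t c : ℂ) (θ : ℝ) :
    GoodRay d m t c (θ + π) ↔ GoodRay d m t c θ := by
  have hexp {n : ℕ} (hn : Even n) : exp ((((n : ℝ) + 2) * ((θ + π : ℝ) : ℂ)) * I) =
      exp ((((n : ℝ) + 2) * θ : ℂ) * I) := by
    obtain ⟨k, rfl⟩ := hn
    rw [show (((k + k : ℕ) : ℝ) + 2) * ((θ + π : ℝ) : ℂ) * I =
        (((k + k : ℕ) : ℝ) + 2) * θ * I + (k + 1 : ℕ) * (2 * π * I) by push_cast; ring,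
      exp_add, exp_nat_mul, exp_two_pi_mul_I, one_pow, mul_one]
  have hray (r : ℝ) : (r : ℂ) * exp (((θ + π : ℝ) : ℂ) * I) = -((r : ℂ) * exp ((θ : ℂ) * I)) := by
    rw [ofReal_add, add_mul, exp_add, exp_pi_mul_I]; ring
  simp only [GoodRay, hexp hd, hexp hm, hray, hd.neg_pow, hm.neg_pow, even_two.neg_pow]

theorem both_real_rays_good_iff_even_even_general
    (d m : ℕ) (hdm : m < d) (hd_even : Even d) (hm_even : Even m)
    (t c : ℂ) (ht : t ≠ 0) (hc : c ≠ 0) :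
    (GoodRay d m t c 0 ∧ GoodRay d m t c Real.pi) ↔
      (|Complex.arg t| < Real.pi ∧ |Complex.arg c| < Real.pi ∧
        |Complex.arg c - Complex.arg t| < Real.pi) := by
  have hπ : GoodRay d m t c π ↔ GoodRay d m t c 0 := by
    simpa using goodRay_add_pi_iff hd_even hm_even t c 0
  rw [hπ, and_self, goodRay_zero_iff, forall_pos_pow_mem_slitPlane_iff hdm]
  refine and_congr_right fun hat => and_congr_right fun hac => ?_
  exact forall_pos_mul_add_mem_slitPlane_iff (mem_slitPlane_of_abs_arg_lt_pi ht hat)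
    (mem_slitPlane_of_abs_arg_lt_pi hc hac)

/-- For `d` and `m` both even, both real rays (positive, `θ = 0`, and negative, `θ = π`)
are good for `Q = t z^d + c z^m` if and only if `(Arg t, Arg c)` lies in the open hexagon
`H = {(x,y) : |x| < π, |y| < π, |y − x| < π}`. -/
theorem both_real_rays_good_iff_even_even
    (d m : ℕ) (hm : 1 ≤ m) (hdm : m < d) (hd_even : Even d) (hm_even : Even m)
    (t c : ℂ) (ht : t ≠ 0) (hc : c ≠ 0) :
    (GoodRay d m t c 0 ∧ GoodRay d m t c Real.pi) ↔
      (|Complex.arg t| < Real.pi ∧ |Complex.arg c| < Real.pi ∧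
        |Complex.arg c - Complex.arg t| < Real.pi) :=
  both_real_rays_good_iff_even_even_general d m hdm hd_even hm_even t c ht hc
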